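/- arXiv:2312.10780 — 8 statements merged into one kernel-verified Lean document; each statement's English description precedes it below -/
import Mathlib

section
/- Let a, b, c, r be real numbers. If the reflection of the point (b, a+c) across the line ℓ_r = {(x,y) ∈ ℝ² : x + r·y − r² = 0} has second coordinate equal to a − c, then r³ − a·r² − b·r + c = 0. (ℓ_r is the fold line: it maps A = (−1,0) onto the line x = 1 and has y-intercept r, so this says that any fold placing A onto x=1 and (b, a+c) onto the line y = a−c produces a root r of the cubic x³ − ax² − bx + c.) -/
/-- The reflection of a point `Q = (u,v)` across the line
`ℓ_r = {(x,y) : x + r*y - r^2 = 0}`. -/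
noncomputable def reflLine (r : ℝ) (Q : ℝ × ℝ) : ℝ × ℝ :=
  (Q.1 - 2 * (Q.1 + r * Q.2 - r ^ 2) / (1 + r ^ 2) * 1,
   Q.2 - 2 * (Q.1 + r * Q.2 - r ^ 2) / (1 + r ^ 2) * r)

/-- If the reflection of `(b, a+c)` across the fold line `ℓ_r` has second
coordinate `a - c`, then `r` is a root of `x^3 - a x^2 - b x + c`. -/
theorem stmt_0 (a b c r : ℝ)
    (h : (reflLine r (b, a + c)).2 = a - c) :
    r ^ 3 - a * r ^ 2 - b * r + c = 0 := by
  have hr : (1 : ℝ) + r ^ 2 ≠ 0 := by positivity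
  simp only [reflLine] at h
  field_simp at h
  nlinarith [h, sq_nonneg r]
end

section
/- Let a, b, c, r be real numbers with r³ − a·r² − b·r + c = 0. Then the reflection of the point (b, a+c) across the line ℓ_r = {(x,y) ∈ ℝ² : x + r·y − r² = 0} has second coordinate equal to a − c. (Thus every real root r of x³ − ax² − bx + c arises from a fold placing A = (−1,0) onto the line x = 1 and (b, a+c) onto the line y = a−c.) -/
/-- If `r` is a root of `x^3 - a x^2 - b x + c`, then the reflection of
`(b, a+c)` across the fold line `ℓ_r` has second coordinate `a - c`. -/
theorem stmt_1 (a b c r : ℝ)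
    (h : r ^ 3 - a * r ^ 2 - b * r + c = 0) :
    (reflLine r (b, a + c)).2 = a - c := by
  have hne : (1 + r ^ 2) ≠ 0 := by positivity
  simp only [reflLine]
  field_simp
  nlinarith [h]
end

section
/- Fix p, q ∈ ℝ and set P = (p,q). For every r ∈ ℝ, the reflection P'(r) of P across the line ℓ_r lies on Beloch's curve: writing P'(r) = (s,t), we have F(s,t) = 2(q−t)² − (q+t)(q−t)(p−s) − (p−s)²(p+s) = 0. -/
/-- Beloch's polynomial `F(x,y)` associated with `P = (p,q)`. -/
def belochF (p q x y : ℝ) : ℝ :=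
  2 * (q - y) ^ 2 - (q + y) * (q - y) * (p - x) - (p - x) ^ 2 * (p + x)

/-- For every `r`, the reflection `P'(r)` of `P = (p,q)` across `ℓ_r` lies on
Beloch's curve `F(x,y) = 0`. -/
theorem stmt_4 (p q r : ℝ) :
    belochF p q (reflLine r (p, q)).1 (reflLine r (p, q)).2 = 0 := by
  have h : (1 + r ^ 2) ≠ 0 := by positivity
  simp only [belochF, reflLine]
  field_simp
  ring
end

section
/- Fix p, q ∈ ℝ and set P = (p,q). Beloch's curve 𝓕 = {(x,y) ∈ ℝ² : F(x,y) = 0} is exactly the union of the orbit of P and the singleton {P}: 𝓕 = {P'(r) : r ∈ ℝ} ∪ {(p,q)}. In particular, every point (s,t) ≠ (p,q) with F(s,t) = 0 equals P'(r) for some r ∈ ℝ. -/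
/-!
Write a point of the plane as `(p - u, q - r u)`, i.e. as seen from `P = (p,q)` along the line of
slope `r` through `P`. On that line `F` factors as `u² ((1 + r²) u - 2 (p + r q - r²))`, and the
second factor vanishes exactly at `P'(r)`, which lies on the same line because the reflection moves
`P` along the normal `(1, r)` of `ℓ_r`. Every point other than `P` lies on such a line (the vertical
line through `P` meets `𝓕` only at `P`), so `𝓕 \ {P}` is the orbit of `P`.
-/

theorem belochF_sub_mul (p q r u : ℝ) :
    belochF p q (p - u) (q - r * u) = u ^ 2 * ((1 + r ^ 2) * u - 2 * (p + r * q - r ^ 2)) := by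
  unfold belochF
  ring

theorem belochF_self_fst (p q t : ℝ) : belochF p q p t = 2 * (q - t) ^ 2 := by
  unfold belochF
  ring

theorem reflLine_eq_iff (r p q u : ℝ) :
    reflLine r (p, q) = (p - u, q - r * u) ↔ (1 + r ^ 2) * u = 2 * (p + r * q - r ^ 2) := by
  have hD : (1 : ℝ) + r ^ 2 ≠ 0 := by positivity
  rw [mul_comm (1 + r ^ 2), ← eq_div_iff hD, reflLine, Prod.mk.injEq]
  constructor
  · rintro ⟨h, -⟩
    linarith
  · rintro rfl
    constructor <;> ring

theorem belochF_reflLine (r p q : ℝ) :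
    belochF p q (reflLine r (p, q)).1 (reflLine r (p, q)).2 = 0 := by
  have hD : (1 : ℝ) + r ^ 2 ≠ 0 := by positivity
  set u := 2 * (p + r * q - r ^ 2) / (1 + r ^ 2)
  have hu : (1 + r ^ 2) * u = 2 * (p + r * q - r ^ 2) := mul_div_cancel₀ _ hD
  rw [(reflLine_eq_iff r p q u).mpr hu, belochF_sub_mul, hu, sub_self, mul_zero]

theorem exists_reflLine_eq_of_belochF_eq_zero {p q s t : ℝ} (hF : belochF p q s t = 0)
    (hP : (s, t) ≠ (p, q)) : ∃ r, reflLine r (p, q) = (s, t) := by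
  have hu : p - s ≠ 0 := by
    intro hu
    obtain rfl : s = p := by linarith
    rw [belochF_self_fst] at hF
    exact hP (by rw [show t = q by nlinarith [sq_nonneg (q - t)]])
  set u := p - s
  set r := (q - t) / u
  have hs : s = p - u := by ring
  have ht : t = q - r * u := by rw [div_mul_cancel₀ _ hu]; ring
  refine ⟨r, ?_⟩
  rw [hs, ht, reflLine_eq_iff]
  rw [hs, ht, belochF_sub_mul] at hF
  have hfactor := (mul_eq_zero.mp hF).resolve_left (pow_ne_zero 2 hu)
  linarith

/-- Beloch's curve `𝓕 = {F = 0}` is exactly the union of the orbit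
`{P'(r) : r ∈ ℝ}` of `P = (p,q)` and the singleton `{P}`. -/
theorem stmt_5 (p q : ℝ) :
    {X : ℝ × ℝ | belochF p q X.1 X.2 = 0} =
      (Set.range fun r : ℝ => reflLine r (p, q)) ∪ {(p, q)} := by
  ext X
  constructor
  · intro hF
    by_cases hP : X = (p, q)
    · exact Or.inr hP
    · exact Or.inl (exists_reflLine_eq_of_belochF_eq_zero hF hP)
  · rintro (⟨r, rfl⟩ | rfl)
    · exact belochF_reflLine r p q
    · show belochF p q p q = 0
      rw [belochF_self_fst, sub_self]
      norm_num
end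

section
/- Fix p, q ∈ ℝ and set P = (p,q). Consider the set R = {r ∈ ℝ : P'(r) = P}, where P'(r) is the reflection of P across the fold line ℓ_r. Then: R is empty if and only if 4p + q² < 0; R has exactly one element if and only if 4p + q² = 0; and R has exactly two elements if and only if 4p + q² > 0. (That is, the orbit of P' passes through P zero, one, or two times according to the position of P relative to the parabola 4x + y² = 0.) -/
lemma reflLine_fix_iff (p q r : ℝ) :
    reflLine r (p, q) = (p, q) ↔ (r - q / 2) ^ 2 = (4 * p + q ^ 2) / 4 := by
  have hden : (1 : ℝ) + r ^ 2 ≠ 0 := by positivity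
  constructor
  · intro h
    have h1 : p - 2 * (p + r * q - r ^ 2) / (1 + r ^ 2) * 1 = p :=
      congrArg Prod.fst h
    have h2 : p + r * q - r ^ 2 = 0 := by
      field_simp at h1
      linarith
    nlinarith [h2]
  · intro h
    have h2 : p + r * q - r ^ 2 = 0 := by nlinarith [h]
    unfold reflLine
    simp only [h2]
    norm_num

/-- The set `R = {r : P'(r) = P}` is empty iff `4p + q² < 0`, a singleton iff
`4p + q² = 0`, and has exactly two elements iff `4p + q² > 0`. -/
theorem stmt_10 (p q : ℝ) :
    ({r : ℝ | reflLine r (p, q) = (p, q)} = ∅ ↔ 4 * p + q ^ 2 < 0) ∧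
    ((∃ r₀ : ℝ, {r : ℝ | reflLine r (p, q) = (p, q)} = {r₀}) ↔
        4 * p + q ^ 2 = 0) ∧
    ((∃ r₁ r₂ : ℝ, r₁ ≠ r₂ ∧
        {r : ℝ | reflLine r (p, q) = (p, q)} = {r₁, r₂}) ↔
        4 * p + q ^ 2 > 0) := by
  set D : ℝ := 4 * p + q ^ 2 with hD
  have hset : {r : ℝ | reflLine r (p, q) = (p, q)} = {r : ℝ | (r - q / 2) ^ 2 = D / 4} := by
    ext r; exact reflLine_fix_iff p q r
  rw [hset]
  have hneg : D < 0 → {r : ℝ | (r - q / 2) ^ 2 = D / 4} = ∅ := by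
    intro h
    ext r; simp only [Set.mem_setOf_eq, Set.mem_empty_iff_false, iff_false]
    intro hr
    nlinarith [sq_nonneg (r - q / 2)]
  have hzero : D = 0 → {r : ℝ | (r - q / 2) ^ 2 = D / 4} = {q / 2} := by
    intro h
    ext r
    simp only [Set.mem_setOf_eq, Set.mem_singleton_iff, h]
    constructor
    · intro hr
      have := pow_eq_zero_iff (n := 2) (by norm_num) |>.mp (by linarith [hr] : (r - q/2)^2 = 0)
      linarith
    · intro hr; rw [hr]; ring
  have hpos : D > 0 → ∃ r₁ r₂ : ℝ, r₁ ≠ r₂ ∧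
      {r : ℝ | (r - q / 2) ^ 2 = D / 4} = {r₁, r₂} := by
    intro h
    have hs : Real.sqrt (D / 4) > 0 := Real.sqrt_pos.mpr (by linarith)
    have hs2 : Real.sqrt (D / 4) ^ 2 = D / 4 := Real.sq_sqrt (by linarith)
    refine ⟨q / 2 + Real.sqrt (D / 4), q / 2 - Real.sqrt (D / 4), by intro he; nlinarith, ?_⟩
    ext r
    simp only [Set.mem_setOf_eq, Set.mem_insert_iff, Set.mem_singleton_iff]
    constructor
    · intro hr
      have : (r - q / 2 - Real.sqrt (D / 4)) * (r - q / 2 + Real.sqrt (D / 4)) = 0 := by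
        nlinarith
      rcases mul_eq_zero.mp this with h1 | h1
      · left; linarith
      · right; linarith
    · rintro (hr | hr) <;> rw [hr] <;> nlinarith
  refine ⟨⟨?_, hneg⟩, ⟨?_, fun h => ⟨q / 2, hzero h⟩⟩, ⟨?_, hpos⟩⟩
  · intro h
    rcases lt_trichotomy D 0 with hc | hc | hc
    · exact hc
    · exfalso
      have := hzero hc
      rw [this] at h
      exact (Set.singleton_ne_empty _ h).elim
    · exfalso
      obtain ⟨r₁, r₂, _, hS⟩ := hpos hc
      rw [hS] at h
      have : r₁ ∈ ({r₁, r₂} : Set ℝ) := by simp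
      rw [h] at this
      exact this
  · rintro ⟨r₀, hr₀⟩
    rcases lt_trichotomy D 0 with hc | hc | hc
    · exfalso
      rw [hneg hc] at hr₀
      exact Set.singleton_ne_empty _ hr₀.symm
    · exact hc
    · exfalso
      obtain ⟨r₁, r₂, hne, hS⟩ := hpos hc
      rw [hS] at hr₀
      have h1 : r₁ ∈ ({r₀} : Set ℝ) := hr₀ ▸ (by simp : r₁ ∈ ({r₁, r₂} : Set ℝ))
      have h2 : r₂ ∈ ({r₀} : Set ℝ) := hr₀ ▸ (by simp : r₂ ∈ ({r₁, r₂} : Set ℝ))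
      exact hne (h1.trans h2.symm)
  · rintro ⟨r₁, r₂, hne, hS⟩
    rcases lt_trichotomy D 0 with hc | hc | hc
    · exfalso
      rw [hneg hc] at hS
      have : r₁ ∈ (∅ : Set ℝ) := hS ▸ (by simp : r₁ ∈ ({r₁, r₂} : Set ℝ))
      exact this
    · exfalso
      rw [hzero hc] at hS
      have h1 : r₁ ∈ ({q / 2} : Set ℝ) := hS ▸ (by simp : r₁ ∈ ({r₁, r₂} : Set ℝ))
      have h2 : r₂ ∈ ({q / 2} : Set ℝ) := hS ▸ (by simp : r₂ ∈ ({r₁, r₂} : Set ℝ))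
      exact hne (h1.trans h2.symm)
    · exact hc
end

section
/- Fix p, q ∈ ℝ and r ∈ ℝ; set P = (p,q), A = (−1,0), A' = (1, 2r), and let P' = P'(r) be the reflection of P across ℓ_r. Then: (i) P' = P if and only if dist(A', P) = dist(A, P); (ii) the closed segments [A, P] and [A', P'] intersect and P' ≠ P if and only if dist(A', P) < dist(A, P); (iii) the closed segments [A, P] and [A', P'] are disjoint if and only if dist(A', P) > dist(A, P). -/
/-- The Euclidean distance on `ℝ × ℝ`. -/
noncomputable def edist2 (X Y : ℝ × ℝ) : ℝ :=
  Real.sqrt ((X.1 - Y.1) ^ 2 + (X.2 - Y.2) ^ 2)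

/-- With `P = (p,q)`, `A = (-1,0)`, `A' = (1,2r)`, `P' = P'(r)`:
(i) `P' = P` iff `dist(A',P) = dist(A,P)`;
(ii) `[A,P] ∩ [A',P'] ≠ ∅` and `P' ≠ P` iff `dist(A',P) < dist(A,P)`;
(iii) `[A,P] ∩ [A',P'] = ∅` iff `dist(A',P) > dist(A,P)`. -/
theorem stmt_11 (p q r : ℝ) :
    (reflLine r (p, q) = (p, q) ↔
      edist2 ((1 : ℝ), 2 * r) (p, q) = edist2 ((-1 : ℝ), (0 : ℝ)) (p, q)) ∧
    ((segment ℝ ((-1 : ℝ), (0 : ℝ)) (p, q) ∩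
        segment ℝ ((1 : ℝ), 2 * r) (reflLine r (p, q)) ≠ ∅ ∧
      reflLine r (p, q) ≠ (p, q)) ↔
      edist2 ((1 : ℝ), 2 * r) (p, q) < edist2 ((-1 : ℝ), (0 : ℝ)) (p, q)) ∧
    (segment ℝ ((-1 : ℝ), (0 : ℝ)) (p, q) ∩
        segment ℝ ((1 : ℝ), 2 * r) (reflLine r (p, q)) = ∅ ↔
      edist2 ((1 : ℝ), 2 * r) (p, q) > edist2 ((-1 : ℝ), (0 : ℝ)) (p, q)) := by
  have h1r : (1 + r ^ 2 : ℝ) ≠ 0 := by positivity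
  have h1r' : (0:ℝ) < 1 + r ^ 2 := by positivity
  -- key cancellation fact for the reflection formula
  have hfd : 2 * (p + r * q - r ^ 2) / (1 + r ^ 2) * (1 + r ^ 2)
      = 2 * (p + r * q - r ^ 2) := div_mul_cancel₀ _ h1r
  -- distance comparisons
  have ha : (0:ℝ) ≤ (1 - p) ^ 2 + (2 * r - q) ^ 2 := by positivity
  have hb : (0:ℝ) ≤ (-1 - p) ^ 2 + (0 - q) ^ 2 := by positivity
  have hA' : edist2 ((1 : ℝ), 2 * r) (p, q)
      = Real.sqrt ((1 - p) ^ 2 + (2 * r - q) ^ 2) := rfl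
  have hA : edist2 ((-1 : ℝ), (0 : ℝ)) (p, q)
      = Real.sqrt ((-1 - p) ^ 2 + (0 - q) ^ 2) := rfl
  have heq : edist2 ((1 : ℝ), 2 * r) (p, q) = edist2 ((-1 : ℝ), (0 : ℝ)) (p, q)
      ↔ p + r * q - r ^ 2 = 0 := by
    rw [hA', hA, Real.sqrt_inj ha hb]
    constructor <;> intro h <;> nlinarith
  have hlt : edist2 ((1 : ℝ), 2 * r) (p, q) < edist2 ((-1 : ℝ), (0 : ℝ)) (p, q)
      ↔ 0 < p + r * q - r ^ 2 := by
    rw [hA', hA, Real.sqrt_lt_sqrt_iff ha]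
    constructor <;> intro h <;> nlinarith
  have hgt : edist2 ((-1 : ℝ), (0 : ℝ)) (p, q) < edist2 ((1 : ℝ), 2 * r) (p, q)
      ↔ p + r * q - r ^ 2 < 0 := by
    rw [hA', hA, Real.sqrt_lt_sqrt_iff hb]
    constructor <;> intro h <;> nlinarith
  -- P' = P iff P is on the line
  have hPP : reflLine r (p, q) = (p, q) ↔ p + r * q - r ^ 2 = 0 := by
    simp only [reflLine, Prod.mk.injEq]
    constructor
    · rintro ⟨h1, -⟩
      have h2 : 2 * (p + r * q - r ^ 2) / (1 + r ^ 2) * 1 = 0 := by linarith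
      rw [mul_one, div_eq_zero_iff] at h2
      rcases h2 with h2 | h2
      · linarith
      · exact absurd h2 h1r
    · intro h
      rw [h]
      norm_num
  -- if 0 ≤ p + r*q - r^2 the segments intersect
  have hmeet : 0 ≤ p + r * q - r ^ 2 →
      (segment ℝ ((-1 : ℝ), (0 : ℝ)) (p, q) ∩
        segment ℝ ((1 : ℝ), 2 * r) (reflLine r (p, q))).Nonempty := by
    intro hf
    have hdf : (0:ℝ) < 1 + p + r * q := by nlinarith
    have hdf' : (1 + p + r * q : ℝ) ≠ 0 := ne_of_gt hdf
    obtain ⟨t, ht_def⟩ : ∃ t : ℝ, t = (1 + r ^ 2) / (1 + p + r * q) := ⟨_, rfl⟩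
    have ht0 : 0 ≤ t := by rw [ht_def]; positivity
    have ht1 : t ≤ 1 := by
      rw [ht_def, div_le_one hdf]; linarith
    refine ⟨((1 - t) * (-1) + t * p, (1 - t) * 0 + t * q), ?_, ?_⟩
    · exact ⟨1 - t, t, by linarith, ht0, by ring, by
        simp only [Prod.smul_mk, Prod.mk_add_mk, smul_eq_mul]⟩
    · refine ⟨1 - t, t, by linarith, ht0, by ring, ?_⟩
      simp only [reflLine, Prod.smul_mk, Prod.mk_add_mk, smul_eq_mul, Prod.mk.injEq]
      constructor
      · rw [ht_def]; field_simp; ring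
      · rw [ht_def]; field_simp; ring
  -- if p + r*q - r^2 < 0 the segments are disjoint
  have hdisj : p + r * q - r ^ 2 < 0 →
      segment ℝ ((-1 : ℝ), (0 : ℝ)) (p, q) ∩
        segment ℝ ((1 : ℝ), 2 * r) (reflLine r (p, q)) = ∅ := by
    intro hf
    rw [Set.eq_empty_iff_forall_notMem]
    rintro x ⟨⟨u, v, hu, hv, huv, hx1⟩, ⟨u', v', hu', hv', huv', hx2⟩⟩
    simp only [reflLine, Prod.smul_mk, Prod.mk_add_mk, smul_eq_mul, Prod.ext_iff] at hx1 hx2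
    have hv1 : x.1 + r * x.2 - r ^ 2
        = v * (p + r * q - r ^ 2) - u * (1 + r ^ 2) := by
      rw [← hx1.1, ← hx1.2]
      linear_combination r ^ 2 * huv
    have hv2 : x.1 + r * x.2 - r ^ 2
        = u' * (1 + r ^ 2) - v' * (p + r * q - r ^ 2) := by
      rw [← hx2.1, ← hx2.2]
      linear_combination (-v') * hfd + r ^ 2 * huv'
    have key : (v + v') * (p + r * q - r ^ 2) = (u + u') * (1 + r ^ 2) := by
      linear_combination hv2 - hv1
    have hA1 : (v + v') * (p + r * q - r ^ 2) ≤ 0 :=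
      mul_nonpos_of_nonneg_of_nonpos (by linarith) hf.le
    have h0 : u + u' ≤ 0 := by
      nlinarith [key, hA1, mul_nonneg (by linarith : (0:ℝ) ≤ u + u') (sq_nonneg r)]
    have huu0 : u + u' = 0 := le_antisymm h0 (by linarith)
    have hvv : v + v' = 2 := by linarith
    have hfin : (2:ℝ) * (p + r * q - r ^ 2) = 0 := by
      linear_combination key - (p + r * q - r ^ 2) * hvv + (1 + r ^ 2) * huu0
    linarith
  refine ⟨hPP.trans heq.symm, ?_, ?_⟩
  · constructor
    · rintro ⟨hne, hne'⟩
      rw [hlt]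
      have hf0 : p + r * q - r ^ 2 ≠ 0 := fun h => hne' (hPP.mpr h)
      rcases lt_trichotomy (p + r * q - r ^ 2) 0 with h | h | h
      · exact absurd (hdisj h) hne
      · exact absurd h hf0
      · exact h
    · intro h
      rw [hlt] at h
      refine ⟨?_, fun h' => by rw [hPP] at h'; linarith⟩
      rw [← Set.nonempty_iff_ne_empty]
      exact hmeet (le_of_lt h)
  · constructor
    · intro h
      rw [gt_iff_lt, hgt]
      by_contra h'
      push_neg at h'
      have hne := hmeet h'
      rw [Set.nonempty_iff_ne_empty] at hne
      exact hne h
    · intro h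
      exact hdisj (hgt.mp h)
end

section
/- Fix p, q ∈ ℝ and r ∈ ℝ; set P = (p,q), A = (−1,0), A' = (1, 2r), let P' = P'(r) = (s, t) be the reflection of P across ℓ_r. Then: (i) P' = P if and only if s = p; (ii) the closed segments [A, P] and [A', P'] intersect and P' ≠ P if and only if s < p; (iii) the closed segments [A, P] and [A', P'] are disjoint if and only if s > p. -/
lemma seg_nonempty (p q r : ℝ) (h : 0 ≤ p + r * q - r ^ 2) :
    (segment ℝ ((-1 : ℝ), (0 : ℝ)) (p, q) ∩
      segment ℝ ((1 : ℝ), 2 * r) (reflLine r (p, q))).Nonempty := by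
  have hc : (0:ℝ) < 1 + r ^ 2 := by positivity
  have hec : (0:ℝ) < (p + r * q - r ^ 2) + (1 + r ^ 2) := by linarith
  set τ : ℝ := (1 + r ^ 2) / ((p + r * q - r ^ 2) + (1 + r ^ 2)) with hτ
  have hτ0 : 0 ≤ τ := le_of_lt (div_pos hc hec)
  have hτ1 : τ ≤ 1 := (div_le_one hec).2 (by linarith)
  refine ⟨((1-τ)*(-1) + τ*p, (1-τ)*0 + τ*q), ⟨1-τ, τ, by linarith, hτ0, by ring, ?_⟩,
    ⟨1-τ, τ, by linarith, hτ0, by ring, ?_⟩⟩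
  · simp [Prod.ext_iff]
  · simp only [reflLine, Prod.smul_mk, Prod.mk_add_mk, Prod.mk.injEq, smul_eq_mul]
    rw [hτ]
    obtain ⟨E, hE⟩ : ∃ E, p + r * q - r ^ 2 = E := ⟨_, rfl⟩
    obtain ⟨C, hC⟩ : ∃ C, 1 + r ^ 2 = C := ⟨_, rfl⟩
    rw [hE] at hec ⊢
    rw [hC] at hec hc ⊢
    have h1 : E + C ≠ 0 := by intro h0; linarith
    constructor
    · field_simp [hc.ne', h1]
      ring
    · field_simp [hc.ne', h1]
      ring

lemma seg_empty (p q r : ℝ) (h : p + r * q - r ^ 2 < 0) :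
    segment ℝ ((-1 : ℝ), (0 : ℝ)) (p, q) ∩
      segment ℝ ((1 : ℝ), 2 * r) (reflLine r (p, q)) = ∅ := by
  have hc : (0:ℝ) < 1 + r ^ 2 := by positivity
  rw [Set.eq_empty_iff_forall_notMem]
  rintro z ⟨⟨a, b, ha, hb, hab, hz1⟩, ⟨a', b', ha', hb', hab', hz2⟩⟩
  have h1 : z.1 = a * (-1) + b * p ∧ z.2 = a * 0 + b * q := by
    rw [← hz1]; simp
  have h2 : z.1 = a' * 1 + b' * (reflLine r (p,q)).1 ∧
      z.2 = a' * (2*r) + b' * (reflLine r (p,q)).2 := by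
    rw [← hz2]; simp
  obtain ⟨e1, e2⟩ := h1
  obtain ⟨e3, e4⟩ := h2
  simp only [reflLine] at e3 e4
  have hrefl : (p - 2 * (p + r * q - r ^ 2) / (1 + r ^ 2) * 1)
      + r * (q - 2 * (p + r * q - r ^ 2) / (1 + r ^ 2) * r) - r ^ 2
      = -(p + r * q - r ^ 2) := by
    field_simp
    ring
  have l1 : z.1 + r * z.2 - r ^ 2 = a * (-(1 + r ^ 2)) + b * (p + r * q - r ^ 2) := by
    rw [e1, e2]; linear_combination (r ^ 2) * hab
  have l2 : z.1 + r * z.2 - r ^ 2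
      = a' * (1 + r ^ 2) + b' * (-(p + r * q - r ^ 2)) := by
    rw [e3, e4]; linear_combination b' * hrefl + (r ^ 2) * hab'
  have key : a * (-(1 + r ^ 2)) + b * (p + r * q - r ^ 2)
      = a' * (1 + r ^ 2) + b' * (-(p + r * q - r ^ 2)) := by linarith
  have hne : (0:ℝ) < -(p + r * q - r ^ 2) := by linarith
  have n1 := mul_nonneg ha hc.le
  have n2 := mul_nonneg ha' hc.le
  have n3 := mul_nonneg hb hne.le
  have n4 := mul_nonneg hb' hne.le
  have hsum : a * (1 + r ^ 2) + a' * (1 + r ^ 2) + b * (-(p + r * q - r ^ 2))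
      + b' * (-(p + r * q - r ^ 2)) = 0 := by linear_combination -key
  have hA : a * (1 + r ^ 2) = 0 := by linarith
  have hB : b * (-(p + r * q - r ^ 2)) = 0 := by linarith
  have ha0 : a = 0 := by
    rcases mul_eq_zero.1 hA with h' | h'
    · exact h'
    · linarith
  have hb1 : b = 1 := by linarith
  rw [hb1, one_mul] at hB
  linarith

/-- With `P = (p,q)`, `A = (-1,0)`, `A' = (1,2r)`, `P' = P'(r) = (s,t)`:
(i) `P' = P` iff `s = p`;
(ii) `[A,P] ∩ [A',P'] ≠ ∅` and `P' ≠ P` iff `s < p`;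
(iii) `[A,P] ∩ [A',P'] = ∅` iff `s > p`. -/
theorem stmt_12 (p q r : ℝ) :
    (reflLine r (p, q) = (p, q) ↔ (reflLine r (p, q)).1 = p) ∧
    ((segment ℝ ((-1 : ℝ), (0 : ℝ)) (p, q) ∩
        segment ℝ ((1 : ℝ), 2 * r) (reflLine r (p, q)) ≠ ∅ ∧
      reflLine r (p, q) ≠ (p, q)) ↔ (reflLine r (p, q)).1 < p) ∧
    (segment ℝ ((-1 : ℝ), (0 : ℝ)) (p, q) ∩
        segment ℝ ((1 : ℝ), 2 * r) (reflLine r (p, q)) = ∅ ↔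
      (reflLine r (p, q)).1 > p) := by
  have hc : (0:ℝ) < 1 + r ^ 2 := by positivity
  have hs : (reflLine r (p, q)).1 = p - 2 * (p + r*q - r^2) / (1 + r^2) := by
    simp [reflLine]
  have hse : (reflLine r (p, q)).1 = p ↔ p + r*q - r^2 = 0 := by
    rw [hs]
    constructor
    · intro h
      have h0 : 2 * (p + r*q - r^2) / (1 + r^2) = 0 := by linarith
      field_simp at h0
      linarith
    · intro h; rw [h]; ring
  have hslt : (reflLine r (p, q)).1 < p ↔ 0 < p + r*q - r^2 := by
    rw [hs]
    constructor
    · intro h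
      have h0 : 0 < 2 * (p + r*q - r^2) / (1 + r^2) := by linarith
      have := (lt_div_iff₀ hc).1 h0
      linarith
    · intro h
      have h0 : 0 < 2 * (p + r*q - r^2) / (1 + r^2) := div_pos (by linarith) hc
      linarith
  have hsgt : p < (reflLine r (p, q)).1 ↔ p + r*q - r^2 < 0 := by
    rw [hs]
    constructor
    · intro h
      have h0 : 2 * (p + r*q - r^2) / (1 + r^2) < 0 := by linarith
      rcases div_neg_iff.1 h0 with ⟨_, h2⟩ | ⟨h1, _⟩
      · linarith
      · linarith
    · intro h
      have h0 : 2 * (p + r*q - r^2) / (1 + r^2) < 0 :=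
        div_neg_of_neg_of_pos (by linarith) hc
      linarith
  have hi : reflLine r (p, q) = (p, q) ↔ (reflLine r (p, q)).1 = p := by
    constructor
    · intro h; rw [h]
    · intro h
      have he : p + r*q - r^2 = 0 := hse.1 h
      simp only [reflLine, Prod.mk.injEq]
      constructor
      · rw [show p + r * q - r ^ 2 = 0 from he]; ring
      · rw [show p + r * q - r ^ 2 = 0 from he]; ring
  refine ⟨hi, ?_, ?_⟩
  · constructor
    · rintro ⟨hne, hnp⟩
      rcases lt_trichotomy (p + r*q - r^2) 0 with h | h | h
      · exact absurd (seg_empty p q r h) hne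
      · exact absurd (hi.2 (hse.2 h)) hnp
      · exact hslt.2 h
    · intro h
      have he : 0 < p + r*q - r^2 := hslt.1 h
      exact ⟨Set.nonempty_iff_ne_empty.1 (seg_nonempty p q r he.le),
        fun hP => absurd (hi.1 hP) (ne_of_lt h)⟩
  · constructor
    · intro h
      by_contra hle
      push_neg at hle
      have h0 : 0 ≤ p + r*q - r^2 := by
        rcases lt_trichotomy (p + r*q - r^2) 0 with h' | h' | h'
        · exact absurd (hsgt.2 h') (not_lt.2 hle)
        · linarith
        · linarith
      exact absurd h (Set.nonempty_iff_ne_empty.1 (seg_nonempty p q r h0))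
    · intro h
      exact seg_empty p q r (hsgt.1 h)
end

section
/- Let a₀, a₁, a₂, a₃, a₄ be nonzero real numbers with a₁·a₄ > 0, and define G(x,y) = a₀y² − a₁xy² − a₂xy − a₃x² − a₄x³. Then the origin (0,0) is an isolated point of the curve {(x,y) ∈ ℝ² : G(x,y) = 0} — i.e., there exists ε > 0 such that every (x,y) with G(x,y) = 0 and ‖(x,y)‖ < ε equals (0,0) — if and only if 4·a₀·a₃ + a₂² < 0 (equivalently, a₀a₃/a₁² + (a₂/(2a₁))² < 0, the Hessian determinant of G at the origin being −(4a₀a₃ + a₂²)). -/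
/-- The cubic polynomial `G(x,y) = a₀y² − a₁xy² − a₂xy − a₃x² − a₄x³`. -/
def cubicG (a₀ a₁ a₂ a₃ a₄ x y : ℝ) : ℝ :=
  a₀ * y ^ 2 - a₁ * x * y ^ 2 - a₂ * x * y - a₃ * x ^ 2 - a₄ * x ^ 3

/-!
As a quadratic in `y`, `G(x, y) = (a₀ - a₁x) y² - a₂x y - (a₃x² + a₄x³)` has discriminant
`x² D(x)` with `D(x) = (4a₀a₃ + a₂²) + 4(a₀a₄ - a₁a₃)x - 4a₁a₄x²`. If `4a₀a₃ + a₂² < 0`, then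
`D < 0` near `0`, so a zero of `G` near the origin has `x = 0`, and then `a₀y² = 0`. Otherwise
`D(x) ≥ 0` for some `x ≠ 0` arbitrarily close to `0` (when `4a₀a₃ + a₂² = 0`, the linear
coefficient of `D` cannot vanish, since `a₁a₄ > 0` and `a₂ ≠ 0`), and the quadratic formula gives
zeros `(x, y(x))` of `G` with `y(x) → 0`.
-/

open Filter Topology

section

variable {a₀ a₁ a₂ a₃ a₄ : ℝ}

/-- `x ^ 2 * cubicDisc x` is the discriminant of `G(x, ·)` as a quadratic polynomial in `y`. -/
def cubicDisc (a₀ a₁ a₂ a₃ a₄ x : ℝ) : ℝ :=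
  4 * a₀ * a₃ + a₂ ^ 2 + 4 * (a₀ * a₄ - a₁ * a₃) * x - 4 * (a₁ * a₄) * x ^ 2

lemma cubicG_eq_quadratic (a₀ a₁ a₂ a₃ a₄ x y : ℝ) :
    cubicG a₀ a₁ a₂ a₃ a₄ x y =
      (a₀ - a₁ * x) * (y * y) + -(a₂ * x) * y + -(a₃ * x ^ 2 + a₄ * x ^ 3) := by
  unfold cubicG; ring

lemma discrim_cubicG (a₀ a₁ a₂ a₃ a₄ x : ℝ) :
    discrim (a₀ - a₁ * x) (-(a₂ * x)) (-(a₃ * x ^ 2 + a₄ * x ^ 3)) =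
      x ^ 2 * cubicDisc a₀ a₁ a₂ a₃ a₄ x := by
  unfold discrim cubicDisc; ring

lemma cubicG_eq_zero_iff {x y : ℝ} (hA : a₀ - a₁ * x ≠ 0) :
    cubicG a₀ a₁ a₂ a₃ a₄ x y = 0 ↔
      x ^ 2 * cubicDisc a₀ a₁ a₂ a₃ a₄ x = (2 * (a₀ - a₁ * x) * y - a₂ * x) ^ 2 := by
  rw [cubicG_eq_quadratic, quadratic_eq_zero_iff_discrim_eq_sq hA, discrim_cubicG,
    ← sub_eq_add_neg]

lemma eq_zero_of_cubicG_eq_zero {x y : ℝ} (hA : a₀ - a₁ * x ≠ 0)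
    (hD : cubicDisc a₀ a₁ a₂ a₃ a₄ x < 0) (hG : cubicG a₀ a₁ a₂ a₃ a₄ x y = 0) :
    x = 0 ∧ y = 0 := by
  rw [cubicG_eq_zero_iff hA] at hG
  have hx : x = 0 :=
    pow_eq_zero_iff two_ne_zero |>.1 <|
      (nonpos_of_mul_nonneg_left (hG ▸ sq_nonneg _) hD).antisymm (sq_nonneg x)
  subst hx
  rw [mul_zero, sub_zero] at hA
  simpa [hA] using hG.symm

theorem cubicG_origin_isolated (h₀ : a₀ ≠ 0) (hΔ : 4 * a₀ * a₃ + a₂ ^ 2 < 0) :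
    ∃ ε > (0 : ℝ), ∀ x y : ℝ, cubicG a₀ a₁ a₂ a₃ a₄ x y = 0 →
      √(x ^ 2 + y ^ 2) < ε → (x, y) = ((0 : ℝ), (0 : ℝ)) := by
  have hnear : ∀ᶠ x in 𝓝 (0 : ℝ), a₀ - a₁ * x ≠ 0 ∧ cubicDisc a₀ a₁ a₂ a₃ a₄ x < 0 := by
    exact (ContinuousAt.eventually_ne (by fun_prop) (by simpa using h₀)).and
      (ContinuousAt.eventually_lt (by unfold cubicDisc; fun_prop) continuousAt_const
        (by simpa [cubicDisc] using hΔ))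
  obtain ⟨ε, hε, hball⟩ := Metric.eventually_nhds_iff.1 hnear
  refine ⟨ε, hε, fun x y hG hxy => ?_⟩
  have hx : dist x 0 < ε := calc
    dist x 0 = √(x ^ 2) := by rw [Real.sqrt_sq_eq_abs, Real.dist_eq, sub_zero]
    _ ≤ √(x ^ 2 + y ^ 2) := Real.sqrt_le_sqrt (le_add_of_nonneg_right (sq_nonneg y))
    _ < ε := hxy
  obtain ⟨hA, hD⟩ := hball hx
  obtain ⟨rfl, rfl⟩ := eq_zero_of_cubicG_eq_zero hA hD hG
  rfl

lemma mul_sub_mul_ne_zero_of_four_mul_mul_add_sq_eq_zero (h₂ : a₂ ≠ 0) (h : 0 < a₁ * a₄)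
    (hΔ : 4 * a₀ * a₃ + a₂ ^ 2 = 0) : a₀ * a₄ - a₁ * a₃ ≠ 0 := by
  intro hb
  have hsq : (a₀ * a₄) ^ 2 = (a₁ * a₄) * (a₀ * a₃) := by
    linear_combination (a₀ * a₄) * hb
  nlinarith [sq_nonneg (a₀ * a₄), mul_pos h (by positivity : 0 < a₂ ^ 2)]

lemma frequently_cubicDisc_nonneg (h₂ : a₂ ≠ 0) (h : 0 < a₁ * a₄)
    (hΔ : 0 ≤ 4 * a₀ * a₃ + a₂ ^ 2) :
    ∃ᶠ x in 𝓝[≠] (0 : ℝ), 0 ≤ cubicDisc a₀ a₁ a₂ a₃ a₄ x := by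
  rcases hΔ.lt_or_eq with hΔ | hΔ
  · refine Eventually.frequently (eventually_nhdsWithin_of_eventually_nhds ?_)
    exact (ContinuousAt.eventually_lt continuousAt_const (by unfold cubicDisc; fun_prop)
      (by simpa [cubicDisc] using hΔ)).mono fun _ => le_of_lt
  · set b := a₀ * a₄ - a₁ * a₃
    have hb : b ≠ 0 := mul_sub_mul_ne_zero_of_four_mul_mul_add_sq_eq_zero h₂ h hΔ.symm
    have htendsto : Tendsto (b * ·) (𝓝[>] 0) (𝓝[≠] 0) :=
      tendsto_nhdsWithin_of_tendsto_nhds_of_eventually_within _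
        (((continuous_const_mul b).tendsto' 0 0 (mul_zero b)).mono_left nhdsWithin_le_nhds)
        (eventually_nhdsWithin_of_forall fun t (ht : 0 < t) => mul_ne_zero hb ht.ne')
    refine htendsto.frequently (Eventually.frequently ?_)
    have hsmall : ∀ᶠ t in 𝓝[>] (0 : ℝ), 0 < 1 - a₁ * a₄ * t :=
      eventually_nhdsWithin_of_eventually_nhds <|
        ContinuousAt.eventually_lt continuousAt_const (by fun_prop) (by simp)
    filter_upwards [hsmall, self_mem_nhdsWithin] with t ht (htpos : 0 < t)
    have : cubicDisc a₀ a₁ a₂ a₃ a₄ (b * t) = 4 * b ^ 2 * t * (1 - a₁ * a₄ * t) := by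
      unfold cubicDisc; rw [← hΔ]; ring
    rw [this]
    exact mul_nonneg (by positivity) ht.le

/-- A root of `G(x, ·)` by the quadratic formula. -/
noncomputable def cubicBranch (a₀ a₁ a₂ a₃ a₄ x : ℝ) : ℝ :=
  x * (a₂ + √(cubicDisc a₀ a₁ a₂ a₃ a₄ x)) / (2 * (a₀ - a₁ * x))

lemma cubicG_cubicBranch {x : ℝ} (hA : a₀ - a₁ * x ≠ 0) (hD : 0 ≤ cubicDisc a₀ a₁ a₂ a₃ a₄ x) :
    cubicG a₀ a₁ a₂ a₃ a₄ x (cubicBranch a₀ a₁ a₂ a₃ a₄ x) = 0 := by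
  have hdiscrim : discrim (a₀ - a₁ * x) (-(a₂ * x)) (-(a₃ * x ^ 2 + a₄ * x ^ 3)) =
      (x * √(cubicDisc a₀ a₁ a₂ a₃ a₄ x)) * (x * √(cubicDisc a₀ a₁ a₂ a₃ a₄ x)) := by
    rw [discrim_cubicG, mul_mul_mul_comm, Real.mul_self_sqrt hD, sq]
  rw [cubicG_eq_quadratic, quadratic_eq_zero_iff hA hdiscrim]
  left
  unfold cubicBranch
  ring

lemma continuousAt_cubicBranch (h₀ : a₀ ≠ 0) : ContinuousAt (cubicBranch a₀ a₁ a₂ a₃ a₄) 0 := by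
  unfold cubicBranch cubicDisc
  fun_prop (disch := simpa using h₀)

theorem cubicG_origin_not_isolated (h₀ : a₀ ≠ 0)
    (hfreq : ∃ᶠ x in 𝓝[≠] (0 : ℝ), 0 ≤ cubicDisc a₀ a₁ a₂ a₃ a₄ x) {ε : ℝ} (hε : 0 < ε) :
    ∃ x y : ℝ, cubicG a₀ a₁ a₂ a₃ a₄ x y = 0 ∧ √(x ^ 2 + y ^ 2) < ε ∧
      (x, y) ≠ ((0 : ℝ), (0 : ℝ)) := by
  have hA : ∀ᶠ x in 𝓝 (0 : ℝ), a₀ - a₁ * x ≠ 0 :=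
    ContinuousAt.eventually_ne (by fun_prop) (by simpa using h₀)
  have hsmall : ∀ᶠ x in 𝓝 (0 : ℝ), √(x ^ 2 + cubicBranch a₀ a₁ a₂ a₃ a₄ x ^ 2) < ε :=
    ContinuousAt.eventually_lt
      ((continuousAt_id.pow 2).add ((continuousAt_cubicBranch h₀).pow 2)).sqrt
      continuousAt_const (by simpa [cubicBranch] using hε)
  obtain ⟨x, ⟨hD, hAx, hx⟩, hx0⟩ := (hfreq.and_eventually
    (nhdsWithin_le_nhds (hA.and hsmall)) |>.and_eventually self_mem_nhdsWithin).exists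
  exact ⟨x, _, cubicG_cubicBranch hAx hD, hx, fun h => hx0 (congrArg Prod.fst h)⟩

end

theorem stmt_19_general (a₀ a₁ a₂ a₃ a₄ : ℝ)
    (h₀ : a₀ ≠ 0) (h₂ : a₂ ≠ 0)
    (h : a₁ * a₄ > 0) :
    (∃ ε > (0 : ℝ), ∀ x y : ℝ, cubicG a₀ a₁ a₂ a₃ a₄ x y = 0 →
        Real.sqrt (x ^ 2 + y ^ 2) < ε → (x, y) = ((0 : ℝ), (0 : ℝ))) ↔
      4 * a₀ * a₃ + a₂ ^ 2 < 0 := by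
  refine ⟨fun ⟨ε, hε, hiso⟩ => ?_, cubicG_origin_isolated h₀⟩
  by_contra hΔ
  obtain ⟨x, y, hG, hxy, hne⟩ := cubicG_origin_not_isolated h₀
    (frequently_cubicDisc_nonneg h₂ h (not_lt.1 hΔ)) hε
  exact hne (hiso x y hG hxy)

/-- For nonzero `a₀,…,a₄` with `a₁a₄ > 0`, the origin is an isolated point of
the cubic curve `G = 0` (for the Euclidean norm) iff `4a₀a₃ + a₂² < 0`. -/
theorem stmt_19 (a₀ a₁ a₂ a₃ a₄ : ℝ)
    (h₀ : a₀ ≠ 0) (h₁ : a₁ ≠ 0) (h₂ : a₂ ≠ 0) (h₃ : a₃ ≠ 0) (h₄ : a₄ ≠ 0)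
    (h : a₁ * a₄ > 0) :
    (∃ ε > (0 : ℝ), ∀ x y : ℝ, cubicG a₀ a₁ a₂ a₃ a₄ x y = 0 →
        Real.sqrt (x ^ 2 + y ^ 2) < ε → (x, y) = ((0 : ℝ), (0 : ℝ))) ↔
      4 * a₀ * a₃ + a₂ ^ 2 < 0 :=
  stmt_19_general a₀ a₁ a₂ a₃ a₄ h₀ h₂ h
end
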